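/- arXiv:1909.11690 — 9 statements merged into one kernel-verified Lean document; each statement's English description precedes it below -/
import Mathlib

section
/- Let R be a ring and f an n-tuple of formal power series over R in n variables with f(0) = 0 and det(Jf)(0) a unit in R. Then there exists a unique n-tuple g of formal power series over R with g(0) = 0 and g(f(x)) = f(g(x)) = x. -/
/-! Since `f(0) = 0`, the substitution `w ↦ w ∘ f` agrees with `w ↦ w ∘ ℓ` up to higher order,
where `ℓ = A x` is the linear part of `f`: `ord (w ∘ f - w ∘ ℓ) > ord w`. As `A` is invertible,
`w ↦ (h + w ∘ ℓ - w ∘ f) ∘ ℓ⁻¹` is a contraction for the order, so `w ∘ f = h` has exactly one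
solution for every `h`. Solving `gᵢ ∘ f = xᵢ` gives `g ∘ f = id`; then `(fᵢ ∘ g) ∘ f = fᵢ = xᵢ ∘ f`,
and injectivity of `· ∘ f` gives `f ∘ g = id`. -/

open MvPowerSeries

/-- Substitution of the tuple `f` of multivariate power series into the power series
`g`: the coefficient of a monomial `d` in `g(f)` is the (finite, when every `f j` has
zero constant coefficient) sum over the exponents `e` of total degree at most that of
`d` of `(coeff e g) · coeff d (∏ j, (f j)^(e j))`. -/
noncomputable def substPS {R : Type*} [CommRing R] {n : ℕ}
    (f : Fin n → MvPowerSeries (Fin n) R) (g : MvPowerSeries (Fin n) R) :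
    MvPowerSeries (Fin n) R :=
  fun d =>
    ∑ e ∈ Finset.Iic
        (Finsupp.equivFunOnFinite.symm fun _ : Fin n => d.sum fun _ v => v),
      MvPowerSeries.coeff e g *
        MvPowerSeries.coeff d (∏ j : Fin n, (f j) ^ (e j))

namespace MvPowerSeries

variable {σ τ R : Type*} [CommRing R]

theorem add_add_one_le_order_mul_sub_mul {x x' y y' : MvPowerSeries τ R} {k l : ℕ∞}
    (hx : k ≤ order x) (hy' : l ≤ order y')
    (hxx' : k + 1 ≤ order (x - x')) (hyy' : l + 1 ≤ order (y - y')) :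
    k + l + 1 ≤ order (x * y - x' * y') := by
  have : x * y - x' * y' = x * (y - y') + (x - x') * y' := by ring
  rw [this]
  refine (le_min ?_ ?_).trans min_order_le_add
  · calc k + l + 1 = k + (l + 1) := by rw [add_assoc]
      _ ≤ _ := (add_le_add hx hyy').trans le_order_mul
  · calc k + l + 1 = (k + 1) + l := by rw [add_right_comm]
      _ ≤ _ := (add_le_add hxx' hy').trans le_order_mul

theorem degree_le_order_prod_pow {a : σ → MvPowerSeries τ R}
    (ha : ∀ i, constantCoeff (a i) = 0) (e : σ →₀ ℕ) :
    (e.degree : ℕ∞) ≤ order (e.prod fun i n => a i ^ n) := by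
  rw [Finsupp.degree_apply, Nat.cast_sum]
  exact (Finset.sum_le_sum fun i _ => le_order_pow_of_constantCoeff_eq_zero _ (ha i)).trans
    (le_order_prod _ _)

theorem degree_add_one_le_order_prod_pow_sub_prod_pow {a b : σ → MvPowerSeries τ R}
    (ha : ∀ i, constantCoeff (a i) = 0) (hb : ∀ i, constantCoeff (b i) = 0)
    (hab : ∀ i, 2 ≤ order (a i - b i)) (e : σ →₀ ℕ) :
    (e.degree : ℕ∞) + 1 ≤
      order ((e.prod fun i n => a i ^ n) - e.prod fun i n => b i ^ n) := by
  induction e using Finsupp.induction_linear with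
  | zero => simp
  | add e e' he he' =>
    rw [Finsupp.prod_add_index' (by simp) (fun _ _ _ => pow_add _ _ _),
      Finsupp.prod_add_index' (by simp) (fun _ _ _ => pow_add _ _ _), map_add, Nat.cast_add]
    exact add_add_one_le_order_mul_sub_mul (degree_le_order_prod_pow ha e)
      (degree_le_order_prod_pow hb e') he he'
  | single i m =>
    rw [Finsupp.prod_single_index (h := fun i n => a i ^ n) (pow_zero _),
      Finsupp.prod_single_index (h := fun i n => b i ^ n) (pow_zero _),
      Finsupp.degree_single]
    induction m with
    | zero => simp
    | succ m ih =>
      rw [pow_succ, pow_succ, Nat.cast_succ]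
      exact add_add_one_le_order_mul_sub_mul (le_order_pow_of_constantCoeff_eq_zero _ (ha i))
        ((one_le_order_iff_constCoeff_eq_zero).mpr (hb i)) ih
        (by simpa [one_add_one_eq_two] using hab i)

theorem order_add_one_le_order_subst_sub_subst [Finite σ] {a b : σ → MvPowerSeries τ R}
    (ha : ∀ i, constantCoeff (a i) = 0) (hb : ∀ i, constantCoeff (b i) = 0)
    (hab : ∀ i, 2 ≤ order (a i - b i)) (w : MvPowerSeries σ R) :
    order w + 1 ≤ order (subst a w - subst b w) := by
  have ha' := hasSubst_of_constantCoeff_zero ha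
  have hb' := hasSubst_of_constantCoeff_zero hb
  refine le_order fun d hd => ?_
  rw [map_sub, coeff_subst ha', coeff_subst hb',
    ← finsum_sub_distrib (coeff_subst_finite ha' w d) (coeff_subst_finite hb' w d)]
  refine finsum_eq_zero_of_forall_eq_zero fun e => ?_
  rw [← smul_sub, ← map_sub]
  by_cases he : (e.degree : ℕ∞) < order w
  · rw [coeff_of_lt_order he, zero_smul]
  · have hde : (d.degree : ℕ∞) < e.degree + 1 := hd.trans_le (by gcongr; exact not_lt.mp he)
    rw [coeff_of_lt_order
      (hde.trans_le (degree_add_one_le_order_prod_pow_sub_prod_pow ha hb hab e)), smul_zero]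

theorem order_le_order_subst [Finite σ] {a : σ → MvPowerSeries τ R}
    (ha : ∀ i, constantCoeff (a i) = 0) (w : MvPowerSeries σ R) :
    order w ≤ order (subst a w) := by
  refine le_trans ?_ (le_order_subst (hasSubst_of_constantCoeff_zero ha) w)
  calc order w = 1 * order w := (one_mul _).symm
    _ ≤ _ := by
      gcongr
      exact le_iInf fun i => (one_le_order_iff_constCoeff_eq_zero).mpr (ha i)

theorem existsUnique_fixedPoint_of_contracting
    {Ψ : MvPowerSeries σ R → MvPowerSeries σ R}
    (hΨ : ∀ u v, order (u - v) + 1 ≤ order (Ψ u - Ψ v)) : ∃! w, Ψ w = w := by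
  set A : ℕ → MvPowerSeries σ R := fun m => Ψ^[m] 0
  have hA : ∀ m, Ψ (A m) = A (m + 1) := fun m => (Function.iterate_succ_apply' Ψ m 0).symm
  have step : ∀ m : ℕ, (m : ℕ∞) ≤ order (A (m + 1) - A m) := by
    intro m
    induction m with
    | zero => simp
    | succ m ih =>
      have := hΨ (A (m + 1)) (A m)
      rw [hA, hA] at this
      calc ((m + 1 : ℕ) : ℕ∞) ≤ order (A (m + 1) - A m) + 1 := by push_cast; gcongr
        _ ≤ _ := this
  have stable : ∀ (m k : ℕ) (d : σ →₀ ℕ), m ≤ k → (d.degree : ℕ∞) < m →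
      coeff d (A k) = coeff d (A m) := by
    intro m k d hmk hd
    induction k, hmk using Nat.le_induction with
    | base => rfl
    | succ k hmk ih =>
      rw [← ih, ← sub_eq_zero, ← map_sub]
      exact coeff_of_lt_order (hd.trans_le ((Nat.cast_le.mpr hmk).trans (step k)))
  set w : MvPowerSeries σ R := fun d => coeff d (A (d.degree + 1))
  have hw : ∀ m : ℕ, (m : ℕ∞) ≤ order (w - A m) := by
    intro m
    refine le_order fun d hd => ?_
    rw [map_sub, sub_eq_zero]
    have hd' : d.degree < m := by exact_mod_cast hd
    exact (stable _ m d hd' (Nat.cast_lt.mpr (Nat.lt_succ_self _))).symm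
  have hfix : Ψ w = w := by
    rw [← sub_eq_zero, ← order_eq_top_iff, ENat.eq_top_iff_forall_ge]
    intro m
    have : Ψ w - w = (Ψ w - Ψ (A m)) - (w - A (m + 1)) := by rw [hA]; ring
    rw [this, sub_eq_add_neg]
    refine (le_min ?_ ?_).trans min_order_le_add
    · exact ((hw m).trans le_self_add).trans (hΨ w (A m))
    · rw [order_neg]
      exact (hw (m + 1)).trans' (by norm_num)
  refine ⟨w, hfix, fun u hu => ?_⟩
  have h := hΨ u w
  rw [hu, hfix] at h
  rw [← sub_eq_zero, ← order_eq_top_iff]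
  by_contra hne
  exact ((ENat.add_one_le_iff hne).mp h).false

section Linear

variable [Fintype σ]

noncomputable def linearForms (A : Matrix σ σ R) (i : σ) : MvPowerSeries σ R := ∑ j, A i j • X j

noncomputable def linearPart (f : σ → MvPowerSeries σ R) : Matrix σ σ R :=
  Matrix.of fun i j => coeff (Finsupp.single j 1) (f i)

theorem constantCoeff_linearForms (A : Matrix σ σ R) (i : σ) :
    constantCoeff (linearForms A i) = 0 := by
  simp [linearForms]

theorem coeff_single_linearForms [DecidableEq σ] (A : Matrix σ σ R) (i j : σ) :
    coeff (Finsupp.single j 1) (linearForms A i) = A i j := by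
  simp [linearForms, coeff_X, Finsupp.single_left_inj]

theorem linearForms_one [DecidableEq σ] : linearForms (1 : Matrix σ σ R) = X := by
  ext1 i
  simp [linearForms, Matrix.one_apply]

theorem subst_linearForms (A B : Matrix σ σ R) (i : σ) :
    subst (linearForms A) (linearForms B i) = linearForms (B * A) i := by
  have hA := hasSubst_of_constantCoeff_zero (constantCoeff_linearForms A)
  rw [← coe_substAlgHom hA, linearForms, map_sum]
  simp_rw [map_smul, substAlgHom_X, linearForms, Finset.smul_sum, smul_smul]
  rw [Finset.sum_comm]
  simp [Matrix.mul_apply, Finset.sum_smul]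

theorem subst_linearForms_subst_linearForms (A B : Matrix σ σ R) (w : MvPowerSeries σ R) :
    subst (linearForms A) (subst (linearForms B) w) = subst (linearForms (B * A)) w := by
  rw [subst_comp_subst_apply (hasSubst_of_constantCoeff_zero (constantCoeff_linearForms B))
    (hasSubst_of_constantCoeff_zero (constantCoeff_linearForms A))]
  simp only [subst_linearForms]

theorem subst_linearForms_mul_eq_one [DecidableEq σ] {A B : Matrix σ σ R} (h : B * A = 1)
    (w : MvPowerSeries σ R) : subst (linearForms A) (subst (linearForms B) w) = w := by
  rw [subst_linearForms_subst_linearForms, h, linearForms_one, subst_self, id]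

theorem two_le_order_sub_linearForms_linearPart [DecidableEq σ] {f : σ → MvPowerSeries σ R}
    (hf : ∀ i, constantCoeff (f i) = 0) (i : σ) :
    2 ≤ order (f i - linearForms (linearPart f) i) := by
  refine nat_le_order fun d hd => ?_
  rw [map_sub]
  interval_cases h : d.degree
  · rw [(Finsupp.degree_eq_zero_iff d).mp h, coeff_zero_eq_constantCoeff_apply,
      coeff_zero_eq_constantCoeff_apply, hf, constantCoeff_linearForms, sub_zero]
  · obtain ⟨j, rfl⟩ : d ∈ Set.range fun j => Finsupp.single j 1 := by
      rw [Finsupp.range_single_one]; exact h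
    rw [coeff_single_linearForms, linearPart, Matrix.of_apply, sub_self]

end Linear

theorem constantCoeff_subst_of_constantCoeff_zero [Finite σ] {a : σ → MvPowerSeries τ R}
    (ha : ∀ i, constantCoeff (a i) = 0) (w : MvPowerSeries σ R) :
    constantCoeff (subst a w) = constantCoeff w := by
  have ha' := hasSubst_of_constantCoeff_zero ha
  have h := constantCoeff_subst_eq_zero ha' ha (f := w - C (constantCoeff w)) (by simp)
  rwa [subst_sub ha', subst_C, map_sub, constantCoeff_C, sub_eq_zero] at h

theorem existsUnique_subst_eq [Fintype σ] [DecidableEq σ] {f : σ → MvPowerSeries σ R}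
    (hf : ∀ i, constantCoeff (f i) = 0) (hdet : IsUnit (linearPart f).det)
    (h : MvPowerSeries σ R) : ∃! w : MvPowerSeries σ R, subst f w = h := by
  set A := linearPart f
  have hL := hasSubst_of_constantCoeff_zero (constantCoeff_linearForms A)
  have hLinv := hasSubst_of_constantCoeff_zero (constantCoeff_linearForms A⁻¹)
  have hF := hasSubst_of_constantCoeff_zero hf
  set Ψ : MvPowerSeries σ R → MvPowerSeries σ R :=
    fun w => subst (linearForms A⁻¹) (h + subst (linearForms A) w - subst f w)
  have hfix : ∀ w, Ψ w = w ↔ subst f w = h := by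
    intro w
    constructor
    · intro hw
      have := congrArg (subst (linearForms A)) hw
      rw [subst_linearForms_mul_eq_one (Matrix.nonsing_inv_mul A hdet)] at this
      linear_combination -this
    · intro hw
      simp only [Ψ, hw, add_sub_cancel_left]
      exact subst_linearForms_mul_eq_one (Matrix.mul_nonsing_inv A hdet) w
  have hcontr : ∀ u v, order (u - v) + 1 ≤ order (Ψ u - Ψ v) := by
    intro u v
    have : Ψ u - Ψ v = subst (linearForms A⁻¹)
        (-(subst f (u - v) - subst (linearForms A) (u - v))) := by
      rw [← subst_sub hLinv, subst_sub hL, subst_sub hF]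
      congr 1
      ring
    rw [this]
    calc order (u - v) + 1
        ≤ order (subst f (u - v) - subst (linearForms A) (u - v)) :=
          order_add_one_le_order_subst_sub_subst hf (constantCoeff_linearForms A)
            (two_le_order_sub_linearForms_linearPart hf) (u - v)
      _ = order (-(subst f (u - v) - subst (linearForms A) (u - v))) := (order_neg _).symm
      _ ≤ _ := order_le_order_subst (constantCoeff_linearForms _) _
  exact (existsUnique_congr hfix).mp (existsUnique_fixedPoint_of_contracting hcontr)

end MvPowerSeries

theorem substPS_eq_subst {R : Type*} [CommRing R] {n : ℕ} {f : Fin n → MvPowerSeries (Fin n) R}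
    (hf : ∀ i, constantCoeff (f i) = 0) (g : MvPowerSeries (Fin n) R) :
    substPS f g = subst f g := by
  ext d
  rw [coeff_subst (hasSubst_of_constantCoeff_zero hf), finsum_eq_sum_of_support_subset _ ?_]
  · refine Finset.sum_congr rfl fun e _ => ?_
    rw [smul_eq_mul, Finsupp.prod_fintype _ _ fun _ => pow_zero _]
  · intro e he
    have hde : (e.degree : ℕ∞) ≤ d.degree :=
      (degree_le_order_prod_pow hf e).trans (order_le (right_ne_zero_of_smul he))
    simp only [Finset.coe_Iic, Set.mem_Iic, Finsupp.le_def]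
    intro j
    exact (Finsupp.le_degree j e).trans (by exact_mod_cast hde)

/-- Formal inverse function theorem: let `R` be a commutative ring and
`f ∈ R[[x₁,…,xₙ]]ⁿ` with `f(0) = 0` and `det((Jf)(0))` a unit in `R`. Then there is a
unique `g ∈ R[[x₁,…,xₙ]]ⁿ` with `g(0) = 0` and `g(f(x)) = f(g(x)) = x`. -/
theorem stmt_0 {R : Type*} [CommRing R] (n : ℕ)
    (f : Fin n → MvPowerSeries (Fin n) R)
    (hf0 : ∀ i, MvPowerSeries.constantCoeff (f i) = 0)
    (hjac : IsUnit (Matrix.det (Matrix.of fun i j =>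
      MvPowerSeries.coeff (Finsupp.single j 1) (f i)))) :
    ∃! g : Fin n → MvPowerSeries (Fin n) R,
      (∀ i, MvPowerSeries.constantCoeff (g i) = 0) ∧
      (∀ i, substPS f (g i) = MvPowerSeries.X i) ∧
      (∀ i, substPS g (f i) = MvPowerSeries.X i) := by
  have hF := hasSubst_of_constantCoeff_zero hf0
  have hsolve := existsUnique_subst_eq hf0 hjac
  choose g hg huniq using fun i => hsolve (X i)
  have hg0 : ∀ i, constantCoeff (g i) = 0 := fun i => by
    rw [← constantCoeff_subst_of_constantCoeff_zero hf0, hg i, constantCoeff_X]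
  have hfg : ∀ i, subst g (f i) = X i := fun i => (hsolve (f i)).unique
    (by rw [subst_comp_subst_apply (hasSubst_of_constantCoeff_zero hg0) hF, funext hg,
      subst_self, id])
    (subst_X hF i)
  refine ⟨g, ⟨hg0, fun i => (substPS_eq_subst hf0 _).trans (hg i),
    fun i => (substPS_eq_subst hg0 _).trans (hfg i)⟩, ?_⟩
  rintro g' ⟨-, hg', -⟩
  exact funext fun i => huniq i _ ((substPS_eq_subst hf0 _).symm.trans (hg' i))
end

section
/- Let R ⊆ S be an extension of commutative rings and f ∈ R[x₁,...,xₙ]ⁿ. If f is invertible over S (i.e., S[f] = S[x]) and det((Jf)(0)) is a unit in R, then f is invertible over R (i.e., R[f] = R[x]). -/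
open MvPolynomial

namespace Stmt1Aux

variable {n : ℕ}

lemma degree_single (j : Fin n) (b : ℕ) : Finsupp.degree (Finsupp.single j b) = b := by
  classical
  rcases eq_or_ne b 0 with h | h
  · simp [h]
  · rw [Finsupp.degree_apply, Finsupp.support_single_ne_zero _ h]
    simp

lemma degree_add (u v : Fin n →₀ ℕ) :
    Finsupp.degree (u + v) = Finsupp.degree u + Finsupp.degree v := by
  simp only [Finsupp.degree_eq_weight_one, map_add]

lemma degree_pos_of_ne_zero {u : Fin n →₀ ℕ} (h : u ≠ 0) : 1 ≤ Finsupp.degree u := by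
  rcases Nat.eq_zero_or_pos (Finsupp.degree u) with h0 | h0
  · exact absurd ((Finsupp.degree_eq_zero_iff u).mp h0) h
  · exact h0

lemma eq_zero_or_single_of_degree_le_one {u : Fin n →₀ ℕ} (h : Finsupp.degree u ≤ 1) :
    u = 0 ∨ ∃ j, u = Finsupp.single j 1 := by
  classical
  rcases eq_or_ne u 0 with h0 | h0
  · exact Or.inl h0
  right
  obtain ⟨j, hj⟩ := Finsupp.support_nonempty_iff.mpr h0
  refine ⟨j, ?_⟩
  have hj0 : u j ≠ 0 := Finsupp.mem_support_iff.mp hj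
  have hj1 : u j = 1 := le_antisymm ((Finsupp.le_degree j u).trans h) (Nat.one_le_iff_ne_zero.mpr hj0)
  ext i
  rcases eq_or_ne i j with rfl | hij
  · simp [hj1]
  · rw [Finsupp.single_apply, if_neg (Ne.symm hij)]
    by_contra hne
    have hi : i ∈ u.support := Finsupp.mem_support_iff.mpr hne
    have hsub : ({i, j} : Finset (Fin n)) ⊆ u.support := by
      intro t ht
      rcases Finset.mem_insert.mp ht with rfl | ht
      · exact hi
      · rw [Finset.mem_singleton] at ht; subst ht; exact hj
    have h2 : u i + u j ≤ Finsupp.degree u := by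
      rw [← Finset.sum_pair hij]
      exact Finset.sum_le_sum_of_subset hsub
    have : 1 ≤ u i := Nat.one_le_iff_ne_zero.mpr hne
    omega

lemma eval_zero_pderiv {R : Type*} [CommRing R] (p : MvPolynomial (Fin n) R) (j : Fin n) :
    MvPolynomial.eval (fun _ => (0 : R)) (pderiv j p) = coeff (Finsupp.single j 1) p := by
  classical
  induction p using MvPolynomial.induction_on' with
  | add p q hp hq => simp only [map_add, coeff_add, hp, hq]
  | monomial u a =>
    rw [pderiv_monomial, eval_zero', constantCoeff_monomial, coeff_monomial]
    by_cases h : u = Finsupp.single j 1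
    · subst h; simp
    · rw [if_neg h]
      by_cases h2 : u - Finsupp.single j 1 = 0
      · rw [if_pos h2]
        have hle : u ≤ Finsupp.single j 1 := tsub_eq_zero_iff_le.mp h2
        have huj : u j = 0 := by
          by_contra hne
          apply h
          have h1 : u j = 1 :=
            le_antisymm (by simpa using Finsupp.le_def.mp hle j) (Nat.one_le_iff_ne_zero.mpr hne)
          ext i
          rcases eq_or_ne i j with rfl | hij
          · simpa using h1
          · have := Finsupp.le_def.mp hle i
            rw [Finsupp.single_apply, if_neg (Ne.symm hij)] at this ⊢
            omega
        simp [huj]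
      · rw [if_neg h2]

section
variable {S : Type*} [CommRing S] (T : Subring S) (d : ℕ)

/-- all coefficients in degree `< d` lie in `T`, zero constant coefficient. -/
def P1 (Q : MvPolynomial (Fin n) S) : Prop :=
  constantCoeff Q = 0 ∧ ∀ m : Fin n →₀ ℕ, Finsupp.degree m < d → coeff m Q ∈ T

/-- all coefficients in degree `≤ d` lie in `T`, zero constant coefficient. -/
def P2 (Q : MvPolynomial (Fin n) S) : Prop :=
  constantCoeff Q = 0 ∧ ∀ m : Fin n →₀ ℕ, Finsupp.degree m ≤ d → coeff m Q ∈ T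

variable {T d}

lemma P2.toP1 {Q : MvPolynomial (Fin n) S} (h : P2 T d Q) : P1 T d Q :=
  ⟨h.1, fun m hm => h.2 m hm.le⟩

lemma coeff_zero_eq {Q : MvPolynomial (Fin n) S} (h : constantCoeff Q = 0) :
    coeff (0 : Fin n →₀ ℕ) Q = 0 := by
  rwa [constantCoeff_eq] at h

lemma P1.mul_P1 {Q₁ Q₂ : MvPolynomial (Fin n) S} (h1 : P1 T d Q₁) (h2 : P1 T d Q₂) :
    P2 T d (Q₁ * Q₂) := by
  classical
  constructor
  · rw [map_mul, h1.1, zero_mul]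
  · intro m hm
    rw [coeff_mul]
    refine sum_mem fun x hx => ?_
    have hadd : x.1 + x.2 = m := Finset.HasAntidiagonal.mem_antidiagonal.mp hx
    rcases eq_or_ne x.1 0 with hx1 | hx1
    · rw [hx1, coeff_zero_eq h1.1, zero_mul]; exact T.zero_mem
    rcases eq_or_ne x.2 0 with hx2 | hx2
    · rw [hx2, coeff_zero_eq h2.1, mul_zero]; exact T.zero_mem
    have hd : Finsupp.degree x.1 + Finsupp.degree x.2 = Finsupp.degree m := by
      rw [← hadd, degree_add]
    have d1 := degree_pos_of_ne_zero hx1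
    have d2 := degree_pos_of_ne_zero hx2
    exact T.mul_mem (h1.2 _ (by omega)) (h2.2 _ (by omega))

lemma P1.mul_P2 {Q₁ Q₂ : MvPolynomial (Fin n) S} (h1 : P1 T d Q₁) (h2 : P2 T d Q₂) :
    P2 T d (Q₁ * Q₂) := by
  classical
  constructor
  · rw [map_mul, h1.1, zero_mul]
  · intro m hm
    rw [coeff_mul]
    refine sum_mem fun x hx => ?_
    have hadd : x.1 + x.2 = m := Finset.HasAntidiagonal.mem_antidiagonal.mp hx
    rcases eq_or_ne x.2 0 with hx2 | hx2
    · rw [hx2, coeff_zero_eq h2.1, mul_zero]; exact T.zero_mem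
    have hd : Finsupp.degree x.1 + Finsupp.degree x.2 = Finsupp.degree m := by
      rw [← hadd, degree_add]
    have d2 := degree_pos_of_ne_zero hx2
    exact T.mul_mem (h1.2 _ (by omega)) (h2.2 _ (by omega))

lemma P1.pow {Q : MvPolynomial (Fin n) S} (h : P1 T d Q) :
    ∀ b : ℕ, 1 ≤ b → P1 T d (Q ^ b) ∧ (2 ≤ b → P2 T d (Q ^ b)) := by
  intro b hb
  induction b with
  | zero => omega
  | succ b ih =>
    rcases Nat.eq_zero_or_pos b with rfl | hb1
    · rw [pow_one]; exact ⟨h, by omega⟩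
    · have ih' := ih hb1
      rw [pow_succ, mul_comm]
      exact ⟨(h.mul_P1 ih'.1).toP1, fun _ => h.mul_P1 ih'.1⟩

lemma prod_mem (G : Fin n → MvPolynomial (Fin n) S) (hG : ∀ j, P1 T d (G j))
    (u : Fin n →₀ ℕ) :
    (u ≠ 0 → P1 T d (u.prod fun j k => G j ^ k)) ∧
      (2 ≤ Finsupp.degree u → P2 T d (u.prod fun j k => G j ^ k)) := by
  classical
  induction u using Finsupp.induction with
  | zero => exact ⟨fun h => absurd rfl h, fun h => by simp at h⟩
  | single_add a b u ha hb IH =>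
    have hprod : ((Finsupp.single a b + u).prod fun j k => G j ^ k)
        = G a ^ b * u.prod fun j k => G j ^ k := by
      rw [Finsupp.prod_add_index' (h := fun j k => G j ^ k) (fun j => pow_zero (G j))
          (fun j k l => pow_add (G j) k l),
        Finsupp.prod_single_index (h := fun j k => G j ^ k) (pow_zero (G a))]
    have hpow := (hG a).pow b (Nat.one_le_iff_ne_zero.mpr hb)
    rcases eq_or_ne u 0 with rfl | hu
    · have e : ((Finsupp.single a b + 0).prod fun j k => G j ^ k) = G a ^ b := by
        rw [hprod, Finsupp.prod_zero_index, mul_one]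
      have hdeg : Finsupp.degree (Finsupp.single a b + (0 : Fin n →₀ ℕ)) = b := by
        rw [add_zero, degree_single]
      refine ⟨fun _ => ?_, fun h2 => ?_⟩
      · rw [e]; exact hpow.1
      · rw [e]; exact hpow.2 (by rw [hdeg] at h2; omega)
    · have hP2 : P2 T d ((Finsupp.single a b + u).prod fun j k => G j ^ k) := by
        rw [hprod]; exact hpow.1.mul_P1 ((IH.1 hu))
      exact ⟨fun _ => hP2.toP1, fun _ => hP2⟩

variable (T d) in
lemma coeff_aeval_mem {R : Type*} [CommRing R] [Algebra R S]
    (hT : ∀ r : R, algebraMap R S r ∈ T)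
    (G : Fin n → MvPolynomial (Fin n) S) (hG : ∀ j, P1 T d (G j))
    (p : MvPolynomial (Fin n) R)
    (hp : ∀ u : Fin n →₀ ℕ, Finsupp.degree u ≤ 1 → coeff u p = 0)
    (m : Fin n →₀ ℕ) (hm : Finsupp.degree m ≤ d) :
    coeff m (aeval G p) ∈ T := by
  classical
  have he : aeval G p = ∑ u ∈ p.support, aeval G (monomial u (coeff u p)) := by
    conv_lhs => rw [p.as_sum]
    rw [map_sum]
  rw [he, coeff_sum]
  refine sum_mem fun u hu => ?_
  rw [aeval_monomial, IsScalarTower.algebraMap_apply R S (MvPolynomial (Fin n) S),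
    algebraMap_eq, coeff_C_mul]
  have hdeg : 2 ≤ Finsupp.degree u := by
    by_contra hcon
    exact (mem_support_iff.mp hu) (hp u (by omega))
  exact T.mul_mem (hT _) (((prod_mem G hG u).2 hdeg).2 m hm)

lemma exists_preimage {R : Type*} [CommRing R] (φ : R →+* S) (q : MvPolynomial (Fin n) S)
    (h : ∀ m : Fin n →₀ ℕ, coeff m q ∈ φ.range) :
    ∃ q₀ : MvPolynomial (Fin n) R, MvPolynomial.map φ q₀ = q := by
  classical
  choose r hr using h
  refine ⟨∑ m ∈ q.support, monomial m (r m), ?_⟩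
  rw [map_sum]
  conv_rhs => rw [q.as_sum]
  exact Finset.sum_congr rfl fun m _ => by rw [map_monomial, hr]

end

end Stmt1Aux

/-- Let `R ⊆ S` be an extension of commutative rings and `f ∈ R[x₁,…,xₙ]ⁿ`. If `f` is
invertible over `S` (there is `g` over `S` with `f ∘ g = g ∘ f = x`) and
`det((Jf)(0))` is a unit in `R`, then `f` is invertible over `R`. -/
theorem stmt_1 {R S : Type*} [CommRing R] [CommRing S] [Algebra R S]
    (hinj : Function.Injective (algebraMap R S))
    (n : ℕ) (f : Fin n → MvPolynomial (Fin n) R)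
    (hS : ∃ g : Fin n → MvPolynomial (Fin n) S,
      (∀ i, MvPolynomial.aeval g (f i) = MvPolynomial.X i) ∧
      (∀ i, MvPolynomial.aeval
        (fun j => (f j).map (algebraMap R S)) (g i) = MvPolynomial.X i))
    (hjac : IsUnit (Matrix.det (Matrix.of fun i j =>
      MvPolynomial.eval (fun _ => (0 : R)) (MvPolynomial.pderiv j (f i))))) :
    ∃ g : Fin n → MvPolynomial (Fin n) R,
      (∀ i, MvPolynomial.aeval g (f i) = MvPolynomial.X i) ∧
      (∀ i, MvPolynomial.aeval f (g i) = MvPolynomial.X i) := by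
  classical
  open MvPolynomial Stmt1Aux in
  obtain ⟨g, hg1, hg2⟩ := hS
  set aS : R →+* S := algebraMap R S with haS
  set c : Fin n → R := fun i => MvPolynomial.coeff 0 (f i) with hc
  set cS : Fin n → S := fun i => aS (c i) with hcS
  set A : Matrix (Fin n) (Fin n) R :=
    Matrix.of fun i j => MvPolynomial.coeff (Finsupp.single j 1) (f i) with hA
  have hAjac : (Matrix.of fun i j =>
      MvPolynomial.eval (fun _ => (0 : R)) (MvPolynomial.pderiv j (f i))) = A := by
    ext i j
    exact Stmt1Aux.eval_zero_pderiv (f i) j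
  rw [hAjac] at hjac
  set B : Matrix (Fin n) (Fin n) R := A⁻¹ with hB
  have hBA : B * A = 1 := Matrix.nonsing_inv_mul A hjac
  -- the translated inverse
  set τ : MvPolynomial (Fin n) S →ₐ[S] MvPolynomial (Fin n) S :=
    MvPolynomial.aeval (fun j => MvPolynomial.X j + MvPolynomial.C (cS j)) with hτ
  set G : Fin n → MvPolynomial (Fin n) S := fun k => τ (g k) with hG
  set F : Fin n → MvPolynomial (Fin n) R := fun i => f i - MvPolynomial.C (c i) with hF
  set L : Fin n → MvPolynomial (Fin n) R :=
    fun i => ∑ j, MvPolynomial.C (A i j) * MvPolynomial.X j with hL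
  set H : Fin n → MvPolynomial (Fin n) R := fun i => F i - L i with hH
  have halgC : ∀ r : R, algebraMap R (MvPolynomial (Fin n) S) r = MvPolynomial.C (aS r) := by
    intro r
    rw [IsScalarTower.algebraMap_apply R S (MvPolynomial (Fin n) S), MvPolynomial.algebraMap_eq]
  have hcomp : ∀ i, MvPolynomial.aeval G (f i) = MvPolynomial.X i + MvPolynomial.C (cS i) := by
    intro i
    have h1 : τ (MvPolynomial.aeval g (f i)) = MvPolynomial.aeval G (f i) := by
      rw [hG]
      exact MvPolynomial.comp_aeval_apply (f := g) (φ := τ.restrictScalars R) (p := f i)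
    calc MvPolynomial.aeval G (f i) = τ (MvPolynomial.aeval g (f i)) := h1.symm
      _ = τ (MvPolynomial.X i) := by rw [hg1 i]
      _ = MvPolynomial.X i + MvPolynomial.C (cS i) := by
          rw [hτ, MvPolynomial.aeval_X]
  have hGF : ∀ i, MvPolynomial.aeval G (F i) = MvPolynomial.X i := by
    intro i
    have : F i = f i - MvPolynomial.C (c i) := by rw [hF]
    rw [this, map_sub, hcomp i, MvPolynomial.aeval_C, halgC]
    simp only [hcS]
    ring
  have hG0 : ∀ k, MvPolynomial.constantCoeff (G k) = 0 := by
    intro k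
    have h1 := MvPolynomial.map_aeval
      (fun j => MvPolynomial.X j + MvPolynomial.C (cS j)) MvPolynomial.constantCoeff (g k)
    have h2 := MvPolynomial.map_aeval
      (fun j => (f j).map aS) MvPolynomial.constantCoeff (g k)
    rw [hg2 k] at h2
    have he : (fun j => MvPolynomial.constantCoeff
          ((MvPolynomial.X j + MvPolynomial.C (cS j) : MvPolynomial (Fin n) S)))
        = fun j => MvPolynomial.constantCoeff ((f j).map aS) := by
      funext j
      rw [map_add, MvPolynomial.constantCoeff_X, MvPolynomial.constantCoeff_C, zero_add,
        MvPolynomial.constantCoeff_map, MvPolynomial.constantCoeff_eq]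
    rw [hG]
    show MvPolynomial.constantCoeff (τ (g k)) = 0
    rw [hτ]
    show MvPolynomial.constantCoeff
      (MvPolynomial.aeval (fun j => MvPolynomial.X j + MvPolynomial.C (cS j)) (g k)) = 0
    rw [h1, he, ← h2, MvPolynomial.constantCoeff_X]
  -- coefficients of H vanish in degrees ≤ 1
  have hLcoeff : ∀ i (u : Fin n →₀ ℕ),
      MvPolynomial.coeff u (L i) = ∑ j, A i j * MvPolynomial.coeff u (MvPolynomial.X j : MvPolynomial (Fin n) R) := by
    intro i u
    rw [hL]
    simp only [MvPolynomial.coeff_sum, MvPolynomial.coeff_C_mul]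
  have hHcoeff : ∀ i (u : Fin n →₀ ℕ), Finsupp.degree u ≤ 1 → MvPolynomial.coeff u (H i) = 0 := by
    intro i u hu
    have hHi : H i = F i - L i := by rw [hH]
    have hFi : F i = f i - MvPolynomial.C (c i) := by rw [hF]
    rcases Stmt1Aux.eq_zero_or_single_of_degree_le_one hu with rfl | ⟨j, rfl⟩
    · rw [hHi, hFi, MvPolynomial.coeff_sub, MvPolynomial.coeff_sub, hLcoeff]
      have h1 : MvPolynomial.coeff (0 : Fin n →₀ ℕ) (MvPolynomial.C (c i) : MvPolynomial (Fin n) R) = c i := by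
        simp
      have h2 : ∀ j : Fin n, MvPolynomial.coeff (0 : Fin n →₀ ℕ) (MvPolynomial.X j : MvPolynomial (Fin n) R) = 0 := by
        intro j
        rw [MvPolynomial.coeff_X']
        rw [if_neg]
        exact fun hcon => (one_ne_zero : (1:ℕ) ≠ 0) (Finsupp.single_eq_zero.mp hcon)
      simp only [h1, h2, mul_zero, Finset.sum_const_zero, hc]
      simp
    · rw [hHi, hFi, MvPolynomial.coeff_sub, MvPolynomial.coeff_sub, hLcoeff]
      have h1 : MvPolynomial.coeff (Finsupp.single j 1) (MvPolynomial.C (c i) : MvPolynomial (Fin n) R) = 0 := by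
        rw [MvPolynomial.coeff_C, if_neg]
        exact fun hcon => (one_ne_zero : (1:ℕ) ≠ 0) (Finsupp.single_eq_zero.mp hcon.symm)
      have h2 : ∀ j' : Fin n, MvPolynomial.coeff (Finsupp.single j 1) (MvPolynomial.X j' : MvPolynomial (Fin n) R)
          = if j' = j then 1 else 0 := by
        intro j'
        rw [MvPolynomial.coeff_X']
        by_cases hjj : j' = j
        · subst hjj; rw [if_pos rfl, if_pos rfl]
        · rw [if_neg, if_neg hjj]
          exact fun hcon => hjj (Finsupp.single_left_injective (one_ne_zero : (1:ℕ) ≠ 0) hcon)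
      simp only [h1, h2, mul_ite, mul_one, mul_zero, Finset.sum_ite_eq', Finset.mem_univ, if_pos]
      have h3 : A i j = MvPolynomial.coeff (Finsupp.single j 1) (f i) := by rw [hA]; rfl
      rw [← h3]
      ring
  -- the key linear recursion
  have hsum : ∀ i, (∑ j, MvPolynomial.C (aS (A i j)) * G j)
      = MvPolynomial.X i - MvPolynomial.aeval G (H i) := by
    intro i
    have h1 : MvPolynomial.aeval G (L i) = ∑ j, MvPolynomial.C (aS (A i j)) * G j := by
      have : L i = ∑ j, MvPolynomial.C (A i j) * MvPolynomial.X j := by rw [hL]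
      rw [this, map_sum]
      refine Finset.sum_congr rfl fun j _ => ?_
      rw [map_mul, MvPolynomial.aeval_X, MvPolynomial.aeval_C, halgC]
    have h2 : MvPolynomial.aeval G (F i)
        = MvPolynomial.aeval G (L i) + MvPolynomial.aeval G (H i) := by
      have : F i = L i + H i := by rw [hH]; ring
      rw [this, map_add]
    rw [hGF i] at h2
    rw [← h1]
    exact eq_sub_of_add_eq h2.symm
  have hkey : ∀ k, G k = ∑ i, MvPolynomial.C (aS (B k i)) *
      (MvPolynomial.X i - MvPolynomial.aeval G (H i)) := by
    intro k
    symm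
    calc (∑ i, MvPolynomial.C (aS (B k i)) * (MvPolynomial.X i - MvPolynomial.aeval G (H i)))
        = ∑ i, MvPolynomial.C (aS (B k i)) * ∑ j, MvPolynomial.C (aS (A i j)) * G j := by
          exact Finset.sum_congr rfl fun i _ => by rw [hsum i]
      _ = ∑ j, ∑ i, MvPolynomial.C (aS (B k i)) * (MvPolynomial.C (aS (A i j)) * G j) := by
          simp only [Finset.mul_sum]
          exact Finset.sum_comm
      _ = ∑ j, MvPolynomial.C (aS ((B * A) k j)) * G j := by
          refine Finset.sum_congr rfl fun j _ => ?_
          rw [Matrix.mul_apply, map_sum, map_sum, Finset.sum_mul]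
          exact Finset.sum_congr rfl fun i _ => by rw [map_mul, map_mul, mul_assoc]
      _ = G k := by
          rw [hBA]
          simp only [Matrix.one_apply]
          have : ∀ j, MvPolynomial.C (aS (if k = j then (1:R) else 0)) * G j
              = if k = j then G j else 0 := by
            intro j
            by_cases h : k = j
            · rw [if_pos h, if_pos h, map_one, map_one, one_mul]
            · rw [if_neg h, if_neg h, map_zero, map_zero, zero_mul]
          simp only [this]
          rw [Finset.sum_ite_eq, if_pos (Finset.mem_univ k)]
  -- all coefficients of G lie in the image of R
  set T : Subring S := aS.range with hT
  have hTmem : ∀ r : R, aS r ∈ T := fun r => ⟨r, rfl⟩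
  have main : ∀ d : ℕ, ∀ m : Fin n →₀ ℕ, Finsupp.degree m ≤ d →
      ∀ k, MvPolynomial.coeff m (G k) ∈ T := by
    intro d
    induction d using Nat.strong_induction_on with
    | _ d IH =>
      intro m hm k
      rw [hkey k, MvPolynomial.coeff_sum]
      refine sum_mem fun i _ => ?_
      rw [MvPolynomial.coeff_C_mul, MvPolynomial.coeff_sub]
      refine T.mul_mem (hTmem _) (T.sub_mem ?_ ?_)
      · rw [MvPolynomial.coeff_X']
        split
        · exact T.one_mem
        · exact T.zero_mem
      · refine Stmt1Aux.coeff_aeval_mem T (Finsupp.degree m) hTmem G ?_ (H i)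
          (hHcoeff i) m le_rfl
        intro j
        refine ⟨hG0 j, ?_⟩
        intro m' hm'
        exact IH (Finsupp.degree m') (lt_of_lt_of_le hm' hm) m' le_rfl j
  -- pull G back over R
  have hGpre : ∀ k, ∃ q : MvPolynomial (Fin n) R, MvPolynomial.map aS q = G k := fun k =>
    Stmt1Aux.exists_preimage aS (G k) (fun m => main (Finsupp.degree m) m le_rfl k)
  choose G0 hG0map using hGpre
  set mapAH : MvPolynomial (Fin n) R →ₐ[R] MvPolynomial (Fin n) S :=
    MvPolynomial.mapAlgHom (Algebra.ofId R S) with hmapAH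
  have hmapAH' : ∀ p : MvPolynomial (Fin n) R, mapAH p = MvPolynomial.map aS p := fun p => rfl
  set gR : Fin n → MvPolynomial (Fin n) R :=
    fun k => MvPolynomial.aeval (fun j => MvPolynomial.X j - MvPolynomial.C (c j)) (G0 k) with hgR
  have hmapgR : ∀ k, MvPolynomial.map aS (gR k) = g k := by
    intro k
    have h2 : MvPolynomial.map aS (gR k)
        = MvPolynomial.aeval (fun j => MvPolynomial.X j - MvPolynomial.C (cS j)) (G0 k) := by
      have e1 : MvPolynomial.map aS (gR k) = mapAH (gR k) := rfl
      rw [e1, hgR]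
      rw [MvPolynomial.comp_aeval_apply
        (f := fun j => MvPolynomial.X j - MvPolynomial.C (c j)) (φ := mapAH) (p := G0 k)]
      refine congrFun (congrArg _ ?_) (G0 k)
      congr 1
      funext j
      rw [hmapAH', map_sub, MvPolynomial.map_X, MvPolynomial.map_C]
    rw [h2, ← MvPolynomial.aeval_map_algebraMap (A := S)
      (x := fun j => MvPolynomial.X j - MvPolynomial.C (cS j)) (p := G0 k)]
    have : MvPolynomial.map (algebraMap R S) (G0 k) = G k := hG0map k
    rw [this, hG]
    show MvPolynomial.aeval (fun j => MvPolynomial.X j - MvPolynomial.C (cS j)) (τ (g k)) = g k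
    rw [hτ]
    rw [MvPolynomial.comp_aeval_apply
      (f := fun j => MvPolynomial.X j + MvPolynomial.C (cS j))
      (φ := MvPolynomial.aeval (fun j => MvPolynomial.X j - MvPolynomial.C (cS j))) (p := g k)]
    have e2 : (fun j => (MvPolynomial.aeval fun j' => MvPolynomial.X j' - MvPolynomial.C (cS j'))
        (MvPolynomial.X j + MvPolynomial.C (cS j))) = fun j => (MvPolynomial.X j : MvPolynomial (Fin n) S) := by
      funext j
      rw [map_add, MvPolynomial.aeval_X, MvPolynomial.aeval_C]
      have : algebraMap S (MvPolynomial (Fin n) S) (cS j) = MvPolynomial.C (cS j) := by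
        rw [MvPolynomial.algebraMap_eq]
      rw [this]
      ring
    rw [e2, MvPolynomial.aeval_X_left_apply]
  have hmapinj : Function.Injective
      (MvPolynomial.map aS : MvPolynomial (Fin n) R → MvPolynomial (Fin n) S) :=
    MvPolynomial.map_injective aS hinj
  refine ⟨gR, ?_, ?_⟩
  · intro i
    apply hmapinj
    calc MvPolynomial.map aS (MvPolynomial.aeval gR (f i))
        = MvPolynomial.aeval (fun j => MvPolynomial.map aS (gR j)) (f i) :=
          MvPolynomial.comp_aeval_apply (f := gR) (φ := mapAH) (p := f i)
      _ = MvPolynomial.aeval g (f i) := by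
          refine congrFun (congrArg _ (congrArg _ ?_)) (f i)
          funext j
          rw [hmapgR]
      _ = MvPolynomial.X i := hg1 i
      _ = MvPolynomial.map aS (MvPolynomial.X i) := (MvPolynomial.map_X aS i).symm
  · intro i
    apply hmapinj
    calc MvPolynomial.map aS (MvPolynomial.aeval f (gR i))
        = MvPolynomial.aeval (fun j => MvPolynomial.map aS (f j)) (gR i) :=
          MvPolynomial.comp_aeval_apply (f := f) (φ := mapAH) (p := gR i)
      _ = MvPolynomial.aeval (fun j => MvPolynomial.map aS (f j))
            (MvPolynomial.map aS (gR i)) :=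
          (MvPolynomial.aeval_map_algebraMap (A := S) _ _).symm
      _ = MvPolynomial.aeval (fun j => (f j).map aS) (g i) := by rw [hmapgR]
      _ = MvPolynomial.X i := hg2 i
      _ = MvPolynomial.map aS (MvPolynomial.X i) := (MvPolynomial.map_X aS i).symm
end

section
/- Let R be a domain with enough nonunits. Then for every nonconstant univariate polynomial f ∈ R[x] and every nonzero a ∈ R, there exist a maximal ideal m ⊆ R and an element r ∈ R such that f(r) ∈ m but a ∉ m. -/
/-!
Write `f = c + X g` with `c = f(0)`. For `r ∈ R` one has `f(a c r) = c (1 + a r g(a c r))`, and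
`1 + a X g(a c X)` is nonconstant, so by hypothesis some value `1 + a r g(a c r)` is a nonunit and
lies in a maximal ideal `m`. That value is `≡ 1 mod a`, so `a ∉ m`, while `f(a c r) ∈ m`.
If `c = 0`, the same argument applied to `1 + a X` gives a maximal ideal avoiding `a`, and `r = 0`
works.
-/

open Polynomial

theorem Ideal.notMem_of_one_add_mul_mem {R : Type*} [CommRing R] {I : Ideal R} (hI : I ≠ ⊤)
    {a b : R} (h : 1 + a * b ∈ I) : a ∉ I := fun ha ↦
  hI <| (I.eq_top_iff_one).mpr <| by
    simpa using I.sub_mem h (I.mul_mem_right b ha)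

theorem Polynomial.natDegree_one_add_C_mul_X_mul_pos {R : Type*} [CommRing R] [IsDomain R]
    {a : R} (ha : a ≠ 0) {p : R[X]} (hp : p ≠ 0) : 0 < (1 + C a * X * p).natDegree := by
  have hap : C a * p ≠ 0 := mul_ne_zero (C_ne_zero.mpr ha) hp
  rw [natDegree_add_eq_right_of_natDegree_lt] <;>
    rw [mul_comm (C a), mul_assoc, natDegree_X_mul hap] <;> simp

theorem exists_isMaximal_one_add_mul_mem {R : Type*} [CommRing R] [IsDomain R]
    (henough : ∀ f : R[X], 0 < f.natDegree → ∃ r : R, ¬ IsUnit (f.eval r))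
    {a : R} (ha : a ≠ 0) {p : R[X]} (hp : p ≠ 0) :
    ∃ m : Ideal R, m.IsMaximal ∧ ∃ r : R, 1 + a * (r * p.eval r) ∈ m ∧ a ∉ m := by
  obtain ⟨r, hr⟩ := henough _ (natDegree_one_add_C_mul_X_mul_pos ha hp)
  obtain ⟨m, hm, hmem⟩ := exists_max_ideal_of_mem_nonunits hr
  have hmem' : 1 + a * (r * p.eval r) ∈ m := by
    simpa [mul_assoc] using hmem
  exact ⟨m, hm, r, hmem', Ideal.notMem_of_one_add_mul_mem hm.ne_top hmem'⟩

/-- Let `R` be a domain with enough nonunits (for every nonconstant `f ∈ R[x]` there is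
`r ∈ R` with `f(r)` not a unit). Then for every nonconstant univariate `f ∈ R[x]` and
every nonzero `a ∈ R` there exist a maximal ideal `m ⊆ R` and `r ∈ R` with `f(r) ∈ m`
but `a ∉ m`. -/
theorem stmt_4 {R : Type*} [CommRing R] [IsDomain R]
    (henough : ∀ f : Polynomial R, 0 < f.natDegree → ∃ r : R, ¬ IsUnit (f.eval r))
    (f : Polynomial R) (hf : 0 < f.natDegree) (a : R) (ha : a ≠ 0) :
    ∃ m : Ideal R, m.IsMaximal ∧ ∃ r : R, f.eval r ∈ m ∧ a ∉ m := by
  set c := f.coeff 0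
  obtain ⟨g, hg⟩ := X_dvd_sub_C (p := f)
  have hfg : f = C c + X * g := by rw [← hg]; ring
  by_cases hc : c = 0
  · obtain ⟨m, hm, -, -, ham⟩ := exists_isMaximal_one_add_mul_mem henough ha one_ne_zero
    exact ⟨m, hm, 0, by
      rw [← coeff_zero_eq_eval_zero, show f.coeff 0 = 0 from hc]; exact m.zero_mem, ham⟩
  have hg0 : g ≠ 0 := by
    rintro rfl
    simp [hfg] at hf
  have hgc : g.comp (C (a * c) * X) ≠ 0 := by
    rw [Ne, ← leadingCoeff_eq_zero, leadingCoeff_comp (by simp [ha, hc])]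
    simp [hg0, ha, hc]
  obtain ⟨m, hm, r, hr, ham⟩ := exists_isMaximal_one_add_mul_mem henough ha hgc
  refine ⟨m, hm, a * c * r, ?_, ham⟩
  have hfr : f.eval (a * c * r) = c * (1 + a * (r * (g.comp (C (a * c) * X)).eval r)) := by
    rw [hfg]
    simp only [eval_add, eval_C, eval_mul, eval_X, eval_comp]
    ring
  exact hfr ▸ m.mul_mem_left c hr
end

section
/- Let R be a commutative ring containing a finitely generated ideal I such that R/I is finite and the intersection of all powers Iᵏ (k ≥ 0) equals {0}. Then every surjective polynomial map f : Rⁿ → Rⁿ given by an n-tuple of polynomials in R[x₁,...,xₙ] is injective (hence bijective). -/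
/-!
Reducing modulo `I ^ k` turns `f` into a surjective self-map of the finite set `(R ⧸ I ^ k)ⁿ`,
which is therefore injective. So two points with the same image agree modulo every `I ^ k`,
and hence agree since `⋂ₖ Iᵏ = 0`.
-/

open MvPolynomial

namespace MvPolynomial

variable {σ ι R S : Type*} [CommSemiring R] [CommSemiring S]

theorem surjective_eval_map {q : R →+* S} (hq : Function.Surjective q) {f : ι → MvPolynomial σ R}
    (hf : Function.Surjective fun a : σ → R => fun i => eval a (f i)) :
    Function.Surjective fun x : σ → S => fun i => eval x (map q (f i)) := by
  have hcomm : ((fun x : σ → S => fun i => eval x (map q (f i))) ∘ (q ∘ ·)) =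
      (q ∘ ·) ∘ fun a : σ → R => fun i => eval a (f i) := by
    funext a i
    exact (map_eval q a (f i)).symm
  exact Function.Surjective.of_comp (hcomm ▸ hq.comp_left.comp hf)

theorem comp_eq_comp_of_eval_eq [Finite σ] [Finite S] {q : R →+* S} (hq : Function.Surjective q)
    {f : σ → MvPolynomial σ R} (hf : Function.Surjective fun a : σ → R => fun i => eval a (f i))
    {a b : σ → R} (hab : (fun i => eval a (f i)) = fun i => eval b (f i)) : q ∘ a = q ∘ b := by
  have hinj := Finite.injective_iff_surjective.mpr (surjective_eval_map hq hf)
  apply hinj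
  funext i
  simp only [← map_eval, congrFun hab i]

end MvPolynomial

/-- Let `R` be a commutative ring containing a finitely generated ideal `I` such that
`R/I` is finite and `⋂ₖ Iᵏ = {0}`. Then every surjective polynomial map `f : Rⁿ → Rⁿ`
is injective (hence bijective). -/
theorem stmt_6 {R : Type*} [CommRing R] (I : Ideal R) (hfg : I.FG)
    (hfin : Finite (R ⧸ I)) (hint : (⨅ k : ℕ, I ^ k) = ⊥)
    (n : ℕ) (f : Fin n → MvPolynomial (Fin n) R)
    (hsurj : Function.Surjective (fun a : Fin n → R => fun i => MvPolynomial.eval a (f i))) :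
    Function.Injective (fun a : Fin n → R => fun i => MvPolynomial.eval a (f i)) := by
  intro a b hab
  funext i
  have hmem : ∀ k : ℕ, a i - b i ∈ I ^ k := fun k => by
    have := Ideal.finite_quotient_pow hfg k
    exact Ideal.Quotient.eq.mp <|
      congrFun (comp_eq_comp_of_eval_eq Ideal.Quotient.mk_surjective hsurj hab) i
  have : a i - b i ∈ (⨅ k : ℕ, I ^ k) := Ideal.mem_iInf.mpr hmem
  rwa [hint, Ideal.mem_bot, sub_eq_zero] at this
end

section
/- Let R be a Noetherian local ring with maximal ideal m ≠ (0), with R/m finite, and R complete with respect to the m-adic topology. Let f ∈ R[x₁,...,xₙ]ⁿ. If the induced map f : (R/m)ⁿ → (R/m)ⁿ is bijective and det((Jf)(a)) is a unit in R for every a ∈ Rⁿ, then f : Rⁿ → Rⁿ is surjective. -/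
/-!
Newton's method. Bijectivity on `(R/m)ⁿ` gives `a₀` with `f(a₀) ≡ b mod m`. If `f(a) ≡ b mod I`
and `J` is the (invertible) Jacobian matrix at `a`, then `a' = a - J⁻¹(f(a) - b)` satisfies
`a' ≡ a mod I` and, by first-order Taylor expansion, `f(a') ≡ b mod I²`. Iterating with
`I = mᵏ⁺¹` gives an `m`-adic Cauchy sequence, whose limit solves `f(a) = b` because `R` is complete.
-/

open MvPolynomial
open scoped Matrix

theorem IsPrecomplete.exists_smodEq_of_smodEq_succ {R M : Type*} [CommRing R] [AddCommGroup M]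
    [Module R M] {I : Ideal R} [IsPrecomplete I M] {x : ℕ → M}
    (hx : ∀ k, x k ≡ x (k + 1) [SMOD (I ^ k • ⊤ : Submodule R M)]) :
    ∃ L, ∀ k, x k ≡ L [SMOD (I ^ k • ⊤ : Submodule R M)] := by
  refine IsPrecomplete.prec inferInstance fun {m n} hmn => ?_
  induction n, hmn using Nat.le_induction with
  | base => rfl
  | succ n hmn ih => exact ih.trans ((hx n).mono (Submodule.pow_smul_top_le I M hmn))

namespace MvPolynomial

variable {R σ : Type*} [CommRing R]

theorem eval_sub_eval_mem_of_sub_mem {I : Ideal R} {a a' : σ → R} (h : ∀ i, a i - a' i ∈ I)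
    (p : MvPolynomial σ R) : eval a p - eval a' p ∈ I := by
  have hmod : Ideal.Quotient.mk I ∘ a = Ideal.Quotient.mk I ∘ a' := by
    ext i
    exact Ideal.Quotient.eq.mpr (h i)
  rw [← Ideal.Quotient.eq, map_eval, map_eval, hmod]

variable [Fintype σ]

theorem eval_add_sub_eval_sub_sum_pderiv_mem_sq {I : Ideal R} (a : σ → R) {h : σ → R}
    (hh : ∀ j, h j ∈ I) (p : MvPolynomial σ R) :
    eval (a + h) p - eval a p - ∑ j, h j * eval a (pderiv j p) ∈ I ^ 2 := by
  induction p using MvPolynomial.induction_on with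
  | C c => simp
  | add p q hp hq =>
    convert Ideal.add_mem _ hp hq using 1
    simp only [map_add, mul_add, Finset.sum_add_distrib]
    ring
  | mul_X p j hp =>
    have hsum : ∑ k, h k * eval a (pderiv k (p * X j))
        = (∑ k, h k * eval a (pderiv k p)) * a j + h j * eval a p := by
      classical
      simp only [Derivation.leibniz, pderiv_X, Pi.single_apply, smul_eq_mul, eval_add, eval_mul,
        eval_X, mul_add, Finset.sum_add_distrib, apply_ite (eval a), map_zero, mul_ite,
        mul_one, mul_zero, Finset.sum_ite_eq, Finset.mem_univ, if_true, Finset.sum_mul]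
      rw [add_comm]
      exact congrArg (· + _) (Finset.sum_congr rfl fun k _ => by ring)
    have hsplit : eval (a + h) (p * X j) - eval a (p * X j)
        - ∑ k, h k * eval a (pderiv k (p * X j))
        = (∑ k, h k * eval a (pderiv k p)) * h j
          + (eval (a + h) p - eval a p - ∑ k, h k * eval a (pderiv k p)) * (a j + h j) := by
      rw [hsum]
      simp only [eval_mul, eval_X, Pi.add_apply]
      ring
    rw [hsplit]
    refine Ideal.add_mem _ ?_ (Ideal.mul_mem_right _ _ hp)
    rw [sq]
    exact Ideal.mul_mem_mul (Ideal.sum_mem _ fun k _ => Ideal.mul_mem_right _ _ (hh k)) (hh j)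

noncomputable def jacobianAt (f : σ → MvPolynomial σ R) (a : σ → R) : Matrix σ σ R :=
  Matrix.of fun i j => eval a (pderiv j (f i))

variable [DecidableEq σ]

theorem exists_newton_step {I : Ideal R} (f : σ → MvPolynomial σ R)
    {a b : σ → R} (hJ : IsUnit (jacobianAt f a).det) (ha : ∀ i, eval a (f i) - b i ∈ I) :
    ∃ a', (∀ i, a' i - a i ∈ I) ∧ ∀ i, eval a' (f i) - b i ∈ I ^ 2 := by
  set J := jacobianAt f a
  set h : σ → R := -(J⁻¹ *ᵥ fun i => eval a (f i) - b i)
  have hJh : J *ᵥ h = -fun i => eval a (f i) - b i := by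
    rw [Matrix.mulVec_neg, Matrix.mulVec_mulVec, Matrix.mul_nonsing_inv J hJ, Matrix.one_mulVec]
  have hI : ∀ j, h j ∈ I := fun j =>
    neg_mem (Ideal.sum_mem _ fun l _ => Ideal.mul_mem_left _ _ (ha l))
  refine ⟨a + h, fun i => by simpa using hI i, fun i => ?_⟩
  convert eval_add_sub_eval_sub_sum_pderiv_mem_sq a hI (f i) using 1
  have hlin : ∑ j, h j * eval a (pderiv j (f i)) = (J *ᵥ h) i := by
    simp [J, jacobianAt, Matrix.mulVec, dotProduct, mul_comm]
  rw [hlin, hJh, Pi.neg_apply]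
  ring

theorem exists_newton_sequence {I : Ideal R} (f : σ → MvPolynomial σ R)
    (hJ : ∀ a, IsUnit (jacobianAt f a).det) {a₀ b : σ → R}
    (h₀ : ∀ i, eval a₀ (f i) - b i ∈ I) :
    ∃ s : ℕ → σ → R, ∀ k,
      (∀ i, eval (s k) (f i) - b i ∈ I ^ (k + 1)) ∧ ∀ i, s (k + 1) i - s k i ∈ I ^ (k + 1) := by
  have step (k : ℕ) (a : σ → R) (ha : ∀ i, eval a (f i) - b i ∈ I ^ (k + 1)) :
      ∃ a', (∀ i, a' i - a i ∈ I ^ (k + 1)) ∧ ∀ i, eval a' (f i) - b i ∈ I ^ (k + 2) := by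
    obtain ⟨a', hsub, heval⟩ := exists_newton_step f (hJ a) ha
    have hle : (I ^ (k + 1)) ^ 2 ≤ I ^ (k + 2) := by
      rw [← pow_mul]
      exact Ideal.pow_le_pow_right (by omega)
    exact ⟨a', hsub, fun i => hle (heval i)⟩
  choose next hnext_sub hnext_eval using step
  let t : (k : ℕ) → {a : σ → R // ∀ i, eval a (f i) - b i ∈ I ^ (k + 1)} := fun k =>
    Nat.rec ⟨a₀, by simpa using h₀⟩ (fun k a => ⟨next k a.1 a.2, hnext_eval k a.1 a.2⟩) k
  exact ⟨fun k => (t k).1, fun k => ⟨(t k).2, hnext_sub k (t k).1 (t k).2⟩⟩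

theorem exists_eval_eq_of_isAdicComplete {I : Ideal R} [IsAdicComplete I R]
    (f : σ → MvPolynomial σ R) (hJ : ∀ a, IsUnit (jacobianAt f a).det) {a₀ b : σ → R}
    (h₀ : ∀ i, eval a₀ (f i) - b i ∈ I) : ∃ a, ∀ i, eval a (f i) = b i := by
  obtain ⟨s, hs⟩ := exists_newton_sequence f hJ h₀
  have hcauchy (i : σ) (k : ℕ) : s k i ≡ s (k + 1) i [SMOD (I ^ k • ⊤ : Submodule R R)] := by
    rw [SModEq.comm, SModEq.sub_mem, smul_eq_mul, Ideal.mul_top]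
    exact Ideal.pow_le_pow_right k.le_succ ((hs k).2 i)
  choose L hL using fun i => IsPrecomplete.exists_smodEq_of_smodEq_succ (hcauchy i)
  refine ⟨L, fun i => (IsHausdorff.eq_iff_smodEq (I := I)).mpr fun k => ?_⟩
  simp only [SModEq.sub_mem, smul_eq_mul, Ideal.mul_top] at hL ⊢
  have hlimit : eval L (f i) - eval (s k) (f i) ∈ I ^ k :=
    eval_sub_eval_mem_of_sub_mem (fun j => by simpa using neg_mem (hL j k)) (f i)
  have happrox : eval (s k) (f i) - b i ∈ I ^ k :=
    Ideal.pow_le_pow_right k.le_succ ((hs k).1 i)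
  simpa using Ideal.add_mem _ hlimit happrox

end MvPolynomial

theorem stmt_9_general {R : Type*} [CommRing R] [IsLocalRing R]
    [IsAdicComplete (IsLocalRing.maximalIdeal R) R]
    (n : ℕ) (f : Fin n → MvPolynomial (Fin n) R)
    (hbij : Function.Bijective
      (fun a : Fin n → R ⧸ IsLocalRing.maximalIdeal R => fun i =>
        MvPolynomial.eval a
          ((f i).map (Ideal.Quotient.mk (IsLocalRing.maximalIdeal R)))))
    (hjac : ∀ a : Fin n → R,
      IsUnit (Matrix.det (Matrix.of fun i j =>
        MvPolynomial.eval a (MvPolynomial.pderiv j (f i))))) :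
    Function.Surjective (fun a : Fin n → R => fun i => MvPolynomial.eval a (f i)) := by
  intro b
  set m := IsLocalRing.maximalIdeal R
  obtain ⟨a₀, ha₀⟩ := hbij.2 fun i => Ideal.Quotient.mk m (b i)
  obtain ⟨a₀, rfl⟩ := Ideal.Quotient.mk_surjective.comp_left a₀
  have h₀ (i : Fin n) : eval a₀ (f i) - b i ∈ m := by
    rw [← Ideal.Quotient.eq, map_eval]
    exact congrFun ha₀ i
  obtain ⟨a, ha⟩ := exists_eval_eq_of_isAdicComplete f hjac h₀
  exact ⟨a, funext ha⟩

/-- Let `R` be a Noetherian local ring with maximal ideal `m ≠ (0)`, with `R/m` finite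
and `R` `m`-adically complete, and let `f ∈ R[x₁,…,xₙ]ⁿ`. If the induced map
`f : (R/m)ⁿ → (R/m)ⁿ` is bijective and `det((Jf)(a))` is a unit in `R` for every
`a ∈ Rⁿ`, then `f : Rⁿ → Rⁿ` is surjective. -/
theorem stmt_9 {R : Type*} [CommRing R] [IsNoetherianRing R] [IsLocalRing R]
    (hm : IsLocalRing.maximalIdeal R ≠ ⊥)
    (hfin : Finite (R ⧸ IsLocalRing.maximalIdeal R))
    [IsAdicComplete (IsLocalRing.maximalIdeal R) R]
    (n : ℕ) (f : Fin n → MvPolynomial (Fin n) R)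
    (hbij : Function.Bijective
      (fun a : Fin n → R ⧸ IsLocalRing.maximalIdeal R => fun i =>
        MvPolynomial.eval a
          ((f i).map (Ideal.Quotient.mk (IsLocalRing.maximalIdeal R)))))
    (hjac : ∀ a : Fin n → R,
      IsUnit (Matrix.det (Matrix.of fun i j =>
        MvPolynomial.eval a (MvPolynomial.pderiv j (f i))))) :
    Function.Surjective (fun a : Fin n → R => fun i => MvPolynomial.eval a (f i)) :=
  stmt_9_general n f hbij hjac
end

section
/- Let R be a Noetherian local ring with maximal ideal m ≠ (0) such that R/m is finite and R is m-adically complete. Let f ∈ R[x₁,...,xₙ]ⁿ. If f : Rⁿ → Rⁿ is surjective, then det((Jf)(a)) is a unit in R for every a ∈ Rⁿ. -/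
lemma taylor_aux {R : Type*} [CommRing R] {n : ℕ} (a v : Fin n → R)
    (p : MvPolynomial (Fin n) R) :
    ∃ h : Polynomial R,
      MvPolynomial.aeval (fun j => Polynomial.C (a j) + Polynomial.X * Polynomial.C (v j)) p
        = Polynomial.C (MvPolynomial.eval a p)
          + Polynomial.X * Polynomial.C (∑ j, v j * MvPolynomial.eval a (MvPolynomial.pderiv j p))
          + Polynomial.X ^ 2 * h := by
  induction p using MvPolynomial.induction_on with
  | C r => exact ⟨0, by simp⟩
  | add p q hp hq =>
    obtain ⟨h1, H1⟩ := hp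
    obtain ⟨h2, H2⟩ := hq
    refine ⟨h1 + h2, ?_⟩
    simp only [map_add, H1, H2, Finset.sum_add_distrib, mul_add]
    ring
  | mul_X p i hp =>
    obtain ⟨h1, H1⟩ := hp
    refine ⟨Polynomial.C ((∑ j, v j * MvPolynomial.eval a (MvPolynomial.pderiv j p)) * v i)
        + h1 * Polynomial.C (a i) + Polynomial.X * h1 * Polynomial.C (v i), ?_⟩
    have hsum : ∑ j, v j * MvPolynomial.eval a (MvPolynomial.pderiv j (p * MvPolynomial.X i))
        = (∑ j, v j * MvPolynomial.eval a (MvPolynomial.pderiv j p)) * a i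
          + v i * MvPolynomial.eval a p := by
      simp [MvPolynomial.pderiv_mul, mul_add, Finset.sum_add_distrib, Finset.mul_sum,
        Pi.single_apply, mul_ite, mul_zero, Finset.sum_ite_eq', Finset.sum_mul]
      simp only [apply_ite (MvPolynomial.eval a), map_zero, mul_ite, mul_zero,
        Finset.sum_ite_eq, Finset.mem_univ, if_true]
      rw [Finset.sum_congr rfl fun j (_ : j ∈ Finset.univ) => (by ring :
        v j * (a i * MvPolynomial.eval a (MvPolynomial.pderiv j p))
          = v j * MvPolynomial.eval a (MvPolynomial.pderiv j p) * a i), add_comm]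
    rw [map_mul, H1, hsum]
    simp only [map_mul, map_add, MvPolynomial.aeval_X, MvPolynomial.eval_X]
    ring

lemma eval_add_mul_aux {R : Type*} [CommRing R] {n : ℕ} (a v : Fin n → R) (t : R)
    (p : MvPolynomial (Fin n) R)
    (H : ∃ h : Polynomial R,
      MvPolynomial.aeval (fun j => Polynomial.C (a j) + Polynomial.X * Polynomial.C (v j)) p
        = Polynomial.C (MvPolynomial.eval a p)
          + Polynomial.X * Polynomial.C (∑ j, v j * MvPolynomial.eval a (MvPolynomial.pderiv j p))
          + Polynomial.X ^ 2 * h) :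
    ∃ c : R, MvPolynomial.eval (fun j => a j + t * v j) p
      = MvPolynomial.eval a p
        + t * (∑ j, v j * MvPolynomial.eval a (MvPolynomial.pderiv j p)) + t ^ 2 * c := by
  obtain ⟨h, Hh⟩ := H
  refine ⟨Polynomial.eval t h, ?_⟩
  have key := MvPolynomial.eval₂_comp_left (Polynomial.evalRingHom t)
    (algebraMap R (Polynomial R))
    (fun j => Polynomial.C (a j) + Polynomial.X * Polynomial.C (v j)) p
  rw [← MvPolynomial.aeval_def, Hh] at key
  have hcomp : (Polynomial.evalRingHom t).comp (algebraMap R (Polynomial R)) = RingHom.id R := by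
    ext r; simp
  rw [hcomp] at key
  simp only [Function.comp_def, MvPolynomial.eval₂_id, Polynomial.coe_evalRingHom,
    Polynomial.eval_add, Polynomial.eval_mul, Polynomial.eval_pow,
    Polynomial.eval_C, Polynomial.eval_X] at key
  exact key.symm

lemma finite_quot_sq {R : Type*} [CommRing R] (m : Ideal R) (hfg : m.FG)
    (hfin : Finite (R ⧸ m)) : Finite (R ⧸ m ^ 2) := by
  classical
  obtain ⟨s, hs⟩ := hfg
  choose σ hσ using fun b : R ⧸ m => Ideal.Quotient.mk_surjective (I := m) b
  let Φ : (R ⧸ m) × ({x // x ∈ s} → R ⧸ m) → R ⧸ m ^ 2 := fun bc =>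
    Ideal.Quotient.mk (m ^ 2) (σ bc.1 + ∑ i ∈ s.attach, σ (bc.2 i) * (i : R))
  have hΦ : Function.Surjective Φ := by
    intro x
    obtain ⟨y, rfl⟩ := Ideal.Quotient.mk_surjective (I := m ^ 2) x
    have hy : y - σ (Ideal.Quotient.mk m y) ∈ m := by
      rw [← Ideal.Quotient.eq_zero_iff_mem, map_sub, hσ, sub_self]
    have hy' : y - σ (Ideal.Quotient.mk m y) ∈ Ideal.span (s : Set R) := by
      rw [hs]; exact hy
    rw [Ideal.span, Submodule.mem_span_finset] at hy'
    obtain ⟨c, -, hsum⟩ := hy'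
    refine ⟨⟨Ideal.Quotient.mk m y, fun i => Ideal.Quotient.mk m (c i)⟩, ?_⟩
    have key : σ (Ideal.Quotient.mk m y) + ∑ i ∈ s.attach,
        σ (Ideal.Quotient.mk m (c i)) * (i : R) - y ∈ m ^ 2 := by
      have : σ (Ideal.Quotient.mk m y) + ∑ i ∈ s.attach,
          σ (Ideal.Quotient.mk m (c i)) * (i : R) - y
          = ∑ i ∈ s.attach, (σ (Ideal.Quotient.mk m (c i)) - c i) * (i : R) := by
        have h1 : ∑ i ∈ s.attach, σ (Ideal.Quotient.mk m (c i)) * (i : R)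
            = ∑ i ∈ s, σ (Ideal.Quotient.mk m (c i)) * i :=
          Finset.sum_attach s (fun i => σ (Ideal.Quotient.mk m (c i)) * i)
        have h2 : ∑ i ∈ s.attach, (σ (Ideal.Quotient.mk m (c i)) - c i) * (i : R)
            = ∑ i ∈ s, (σ (Ideal.Quotient.mk m (c i)) - c i) * i :=
          Finset.sum_attach s (fun i => (σ (Ideal.Quotient.mk m (c i)) - c i) * i)
        have hsum' : ∑ i ∈ s, c i * i = y - σ (Ideal.Quotient.mk m y) := by
          simpa [smul_eq_mul] using hsum
        rw [h1, h2]
        simp only [sub_mul]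
        rw [Finset.sum_sub_distrib, hsum']
        ring
      rw [this, pow_two]
      refine Ideal.sum_mem _ fun i _ => Ideal.mul_mem_mul ?_ ?_
      · rw [← Ideal.Quotient.eq_zero_iff_mem, map_sub, hσ, sub_self]
      · rw [← hs]; exact Submodule.subset_span i.2
    show Ideal.Quotient.mk (m ^ 2) _ = Ideal.Quotient.mk (m ^ 2) y
    rw [Ideal.Quotient.mk_eq_mk_iff_sub_mem]
    exact key
  have : Finite ((R ⧸ m) × ({x // x ∈ s} → R ⧸ m)) := by infer_instance
  exact Finite.of_surjective Φ hΦ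


/-- Let `R` be a Noetherian local ring with maximal ideal `m ≠ (0)`, `R/m` finite and
`R` `m`-adically complete, and let `f ∈ R[x₁,…,xₙ]ⁿ`. If `f : Rⁿ → Rⁿ` is surjective,
then `det((Jf)(a))` is a unit in `R` for every `a ∈ Rⁿ`. -/
theorem stmt_10 {R : Type*} [CommRing R] [IsNoetherianRing R] [IsLocalRing R]
    (hm : IsLocalRing.maximalIdeal R ≠ ⊥)
    (hfin : Finite (R ⧸ IsLocalRing.maximalIdeal R))
    [IsAdicComplete (IsLocalRing.maximalIdeal R) R]
    (n : ℕ) (f : Fin n → MvPolynomial (Fin n) R)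
    (hsurj : Function.Surjective
      (fun a : Fin n → R => fun i => MvPolynomial.eval a (f i))) :
    ∀ a : Fin n → R,
      IsUnit (Matrix.det (Matrix.of fun i j =>
        MvPolynomial.eval a (MvPolynomial.pderiv j (f i)))) := by
  intro a
  by_contra hdet
  set m := IsLocalRing.maximalIdeal R with hmdef
  -- the determinant lies in the maximal ideal
  have hdm : Matrix.det (Matrix.of fun i j =>
      MvPolynomial.eval a (MvPolynomial.pderiv j (f i))) ∈ m :=
    (IsLocalRing.mem_maximalIdeal _).2 hdet
  -- find t ∈ m \ m²
  have hneq : ¬ (m : Set R) ⊆ ((m ^ 2 : Ideal R) : Set R) := by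
    intro hsub
    apply hm
    refine Submodule.eq_bot_of_le_smul_of_le_jacobson_bot m m (IsNoetherian.noetherian m) ?_ ?_
    · intro x hx
      have : x ∈ (m ^ 2 : Ideal R) := hsub hx
      rwa [pow_two, ← Ideal.smul_eq_mul] at this
    · rw [IsLocalRing.jacobson_eq_maximalIdeal ⊥ bot_ne_top]
  obtain ⟨t, htm, htm2⟩ := Set.not_subset.1 hneq
  -- find v with some coordinate a unit and J·v ∈ mⁿ
  have hmax : m.IsMaximal := IsLocalRing.maximalIdeal.isMaximal R
  letI : Field (R ⧸ m) := Ideal.Quotient.field m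
  set ρ := Ideal.Quotient.mk m with hρdef
  set M : Matrix (Fin n) (Fin n) (R ⧸ m) :=
    (Matrix.of fun i j => MvPolynomial.eval a (MvPolynomial.pderiv j (f i))).map ρ with hMdef
  have hdet0 : M.det = 0 := by
    rw [hMdef, ← RingHom.mapMatrix_apply, ← RingHom.map_det, Ideal.Quotient.eq_zero_iff_mem]
    exact hdm
  obtain ⟨w, hw0, hwM⟩ := (Matrix.exists_mulVec_eq_zero_iff).2 hdet0
  choose v hv using fun j => Ideal.Quotient.mk_surjective (I := m) (w j)
  obtain ⟨i₀, hwi₀⟩ := Function.ne_iff.1 hw0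
  have hv0 : v i₀ ∉ m := by
    intro h
    apply hwi₀
    simp only [Pi.zero_apply]
    rw [← hv i₀, Ideal.Quotient.eq_zero_iff_mem]
    exact h
  have hJv : ∀ i, (∑ j, v j * MvPolynomial.eval a (MvPolynomial.pderiv j (f i))) ∈ m := by
    intro i
    have h1 := congrFun hwM i
    simp only [Matrix.mulVec, dotProduct, Pi.zero_apply] at h1
    rw [← Ideal.Quotient.eq_zero_iff_mem, map_sum, ← h1]
    refine Finset.sum_congr rfl fun j _ => ?_
    rw [map_mul, hv j]
    simp only [hMdef, Matrix.map_apply, Matrix.of_apply]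
    ring
  -- Taylor expansion
  choose c hc using fun i => eval_add_mul_aux a v t (f i) (taylor_aux a v (f i))
  -- congruence mod m²
  set π := Ideal.Quotient.mk (m ^ 2) with hπdef
  have hmod : ∀ i, π (MvPolynomial.eval (fun j => a j + t * v j) (f i))
      = π (MvPolynomial.eval a (f i)) := by
    intro i
    rw [Ideal.Quotient.mk_eq_mk_iff_sub_mem, hc i]
    have h1 : t * (∑ j, v j * MvPolynomial.eval a (MvPolynomial.pderiv j (f i))) ∈ m ^ 2 := by
      rw [pow_two]
      exact Ideal.mul_mem_mul htm (hJv i)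
    have h2 : t ^ 2 * c i ∈ m ^ 2 :=
      Ideal.mul_mem_right _ _ (Ideal.pow_mem_pow htm 2)
    have := Ideal.add_mem _ h1 h2
    convert this using 1
    ring
  -- the induced map mod m² and its injectivity
  have hfin2 : Finite (R ⧸ m ^ 2) := finite_quot_sq m (IsNoetherian.noetherian m) hfin
  have hcompat : ∀ (x : Fin n → R) (p : MvPolynomial (Fin n) R),
      MvPolynomial.eval (fun j => π (x j)) (MvPolynomial.map π p)
        = π (MvPolynomial.eval x p) := by
    intro x p
    rw [MvPolynomial.eval_map]
    have := MvPolynomial.eval₂_comp_left π (RingHom.id R) x p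
    simp only [RingHomCompTriple.comp_eq, RingHom.comp_id, MvPolynomial.eval₂_id,
      Function.comp_def] at this ⊢
    exact this.symm
  set Fbar : (Fin n → R ⧸ m ^ 2) → (Fin n → R ⧸ m ^ 2) :=
    fun b i => MvPolynomial.eval b (MvPolynomial.map π (f i)) with hFbardef
  have hFsurj : Function.Surjective Fbar := by
    intro b
    choose b' hb' using fun i => Ideal.Quotient.mk_surjective (I := m ^ 2) (b i)
    obtain ⟨x, hx⟩ := hsurj b'
    refine ⟨fun j => π (x j), ?_⟩
    funext i
    rw [hFbardef]
    simp only
    rw [hcompat x (f i)]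
    have := congrFun hx i
    simp only at this
    rw [this, hb']
  have hFinj : Function.Injective Fbar :=
    (Finite.injective_iff_surjective).2 hFsurj
  have heq : Fbar (fun j => π (a j + t * v j)) = Fbar (fun j => π (a j)) := by
    funext i
    rw [hFbardef]
    simp only
    rw [hcompat _ (f i), hcompat _ (f i), hmod i]
  have heq2 := congrFun (hFinj heq) i₀
  have htv : t * v i₀ ∈ m ^ 2 := by
    rw [← Ideal.Quotient.eq_zero_iff_mem]
    have h3 : π (a i₀ + t * v i₀) - π (a i₀) = π (t * v i₀) := by
      rw [← map_sub]; congr 1; ring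
    show π (t * v i₀) = 0
    rw [← h3, heq2, sub_self]
  -- v i₀ is a unit, so t ∈ m², contradiction
  have hunit : IsUnit (v i₀) := by
    by_contra hnu
    exact hv0 ((IsLocalRing.mem_maximalIdeal _).2 hnu)
  obtain ⟨u, hu⟩ := hunit
  apply htm2
  have : t = t * v i₀ * ↑u⁻¹ := by
    rw [← hu, mul_assoc, Units.mul_inv, mul_one]
  rw [this]
  exact Ideal.mul_mem_right _ _ htv
end

section
/- Let f ∈ ℤ[x₁,...,xₙ]ⁿ and suppose f : ℤⁿ → ℤⁿ is surjective. Then for every prime p, the induced map f : ℤₚⁿ → ℤₚⁿ on the p-adic integers is surjective. -/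
/-!
A polynomial map is continuous, and `ℤₚⁿ` is compact, so its image is closed. Surjectivity over
`ℤ` puts the dense subset `ℤⁿ ⊆ ℤₚⁿ` inside that image, which is therefore everything.
-/

open MvPolynomial Set

theorem Continuous.surjective_of_dense_subset_range {X Y : Type*} [TopologicalSpace X]
    [TopologicalSpace Y] [CompactSpace X] [T2Space Y] {F : X → Y} (hF : Continuous F)
    {D : Set Y} (hD : Dense D) (hDF : D ⊆ range F) : Function.Surjective F :=
  range_eq_univ.1 <| eq_univ_of_univ_subset <|
    hD.closure_eq ▸ (isCompact_range hF).isClosed.closure_subset_iff.2 hDF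

namespace MvPolynomial

variable {σ R : Type*} [CommRing R]

theorem aeval_intCast_comp (a : σ → ℤ) (q : MvPolynomial σ ℤ) :
    aeval (Int.cast ∘ a : σ → R) q = (eval a q : R) := by
  simpa using aeval_algebraMap_apply R a q

theorem continuous_aeval_int [TopologicalSpace R] [IsTopologicalRing R]
    (q : MvPolynomial σ ℤ) : Continuous fun a : σ → R => aeval a q := by
  simpa only [aeval_def, algebraMap_int_eq, eval_map] using
    continuous_eval (map (Int.castRingHom R) q)

theorem surjective_aeval_of_surjective_eval_int {ι : Type*} [TopologicalSpace R]
    [IsTopologicalRing R] [CompactSpace R] [T2Space R] (hR : DenseRange (Int.cast : ℤ → R))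
    (f : ι → MvPolynomial σ ℤ) (hsurj : Function.Surjective fun (a : σ → ℤ) i => eval a (f i)) :
    Function.Surjective fun (a : σ → R) i => aeval a (f i) := by
  refine (continuous_pi fun i => continuous_aeval_int (f i)).surjective_of_dense_subset_range
    (DenseRange.piMap fun _ => hR) ?_
  rintro _ ⟨m, rfl⟩
  obtain ⟨a, rfl⟩ := hsurj m
  refine ⟨Int.cast ∘ a, ?_⟩
  funext i
  exact aeval_intCast_comp a (f i)

end MvPolynomial

/-- If a polynomial map `f : ℤⁿ → ℤⁿ` is surjective, then for every prime `p` the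
induced map `f : ℤₚⁿ → ℤₚⁿ` on the `p`-adic integers is surjective. -/
theorem stmt_12 (n : ℕ) (f : Fin n → MvPolynomial (Fin n) ℤ)
    (hsurj : Function.Surjective (fun a : Fin n → ℤ => fun i => MvPolynomial.eval a (f i))) :
    ∀ (p : ℕ) [Fact p.Prime],
      Function.Surjective
        (fun a : Fin n → ℤ_[p] => fun i => MvPolynomial.aeval a (f i)) :=
  fun _ _ => surjective_aeval_of_surjective_eval_int PadicInt.denseRange_intCast f hsurj
end

section
/- Let p₁ < p₂ be prime numbers and f(x) = (p₁x − 1)(p₂x − 1)·x ∈ ℤ[x]. Then the map f : ℤ → ℤ is injective, but for every prime p the induced map f : ℤ₍ₚ₎ → ℤ₍ₚ₎ on the localization of ℤ at p is not injective. -/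
/-!
Over `ℤ` the cubic `(m a - 1)(n a - 1) a` with `m, n ≥ 2` is strictly increasing: its forward
difference is `m n (3a² + 3a + 1) - (m + n)(2a + 1) + 1`, which is positive because
`m n ≥ m + n`. Over `ℤ₍ₚ₎` it has the two roots `0` and `1/p₁`, or `0` and `1/p₂` when `p = p₁`.
-/

open Set

theorem strictMono_cubic_int {m n : ℤ} (hm : 2 ≤ m) (hn : 2 ≤ n) :
    StrictMono (fun a : ℤ => (m * a - 1) * (n * a - 1) * a) := by
  refine strictMono_int_of_lt_succ fun a => ?_
  have hmn : m + n ≤ m * n := by nlinarith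
  have hdiff : (m * (a + 1) - 1) * (n * (a + 1) - 1) * (a + 1) - (m * a - 1) * (n * a - 1) * a
      = m * n * (3 * a ^ 2 + 3 * a + 1) - (m + n) * (2 * a + 1) + 1 := by ring
  have hsq : 0 < 3 * a ^ 2 + 3 * a + 1 := by nlinarith [sq_nonneg (2 * a + 1)]
  rcases le_or_gt 0 a with ha | ha
  · nlinarith
  · nlinarith

theorem not_injOn_of_apply_zero_eq_apply_inv {f : ℚ → ℚ} {p q : ℤ} (hpq : ¬ p ∣ q)
    (hf : f 0 = f (1 / q)) :
    ¬ InjOn f {x : ℚ | ∃ a b : ℤ, ¬ p ∣ b ∧ x = (a : ℚ) / (b : ℚ)} := by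
  intro hinj
  have hq : (q : ℚ) ≠ 0 := Int.cast_ne_zero.2 (by rintro rfl; exact hpq (dvd_zero p))
  have h := hinj ⟨0, q, hpq, by simp⟩ ⟨1, q, hpq, by simp⟩ hf
  simp [hq.symm] at h

/-- Let `p₁ < p₂` be primes and `f(x) = (p₁x − 1)(p₂x − 1)·x`. Then `f : ℤ → ℤ` is
injective, but for every prime `p` the induced map on the localization
`ℤ₍ₚ₎ = { a/b ∈ ℚ : p ∤ b }` of `ℤ` at `p` is not injective. -/
theorem stmt_18 (p₁ p₂ : ℕ) (hp₁ : p₁.Prime) (hp₂ : p₂.Prime) (hlt : p₁ < p₂) :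
    Function.Injective
        (fun a : ℤ => ((p₁ : ℤ) * a - 1) * ((p₂ : ℤ) * a - 1) * a) ∧
      ∀ p : ℕ, p.Prime →
        ¬ Set.InjOn (fun x : ℚ => ((p₁ : ℚ) * x - 1) * ((p₂ : ℚ) * x - 1) * x)
          {x : ℚ | ∃ a b : ℤ, ¬ (p : ℤ) ∣ b ∧ x = (a : ℚ) / (b : ℚ)} := by
  refine ⟨(strictMono_cubic_int (by exact_mod_cast hp₁.two_le)
    (by exact_mod_cast hp₂.two_le)).injective, fun p hp => ?_⟩
  have not_dvd : ∀ {q : ℕ}, q.Prime → p ≠ q → ¬ (p : ℤ) ∣ q := fun hq hne h =>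
    hne ((Nat.prime_dvd_prime_iff_eq hp hq).1 (Int.natCast_dvd_natCast.1 h))
  by_cases hpp₁ : p = p₁
  · exact not_injOn_of_apply_zero_eq_apply_inv (q := p₂) (not_dvd hp₂ (by omega))
      (by simp [hp₂.ne_zero])
  · exact not_injOn_of_apply_zero_eq_apply_inv (q := p₁) (not_dvd hp₁ hpp₁)
      (by simp [hp₁.ne_zero])
end

section
/- Let p be a prime and m a positive integer. The map f : ℤₚ → ℤₚ given by f(x) = xᵐ is injective if and only if gcd(m, 2(p−1)) = 1. -/
/-!
The map `x ↦ xᵐ` is the composite of the maps `x ↦ x^q` over the prime factors `q` of `m`, and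
since `ℤₚ` is integrally closed, `x ↦ x^q` is injective exactly when `ℤₚ` has no `q`-th root of
unity other than `1`. For `q = 2` there is `-1`, and for `q ∣ p - 1` Hensel's lemma lifts an
element of order `q` of `(ℤ/pℤ)ˣ`. Otherwise a `q`-th root of unity `ζ` is `≡ 1 mod p`, and lifting
the exponent gives `vₚ(ζ^q - 1) = vₚ(ζ - 1)` (plus `1` when `q = p`), which forces `ζ = 1`.
-/

universe u

open Function Polynomial IsLocalRing

theorem injective_pow_iff_forall_prime {M : Type*} [Monoid M] {m : ℕ} (hm : m ≠ 0) :
    Injective (fun x : M => x ^ m) ↔ ∀ q, q.Prime → q ∣ m → Injective (fun x : M => x ^ q) := by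
  have pow_mul_eq_comp (a b : ℕ) :
      (fun x : M => x ^ (a * b)) = (fun x => x ^ b) ∘ (fun x => x ^ a) := by
    funext x; simp [pow_mul]
  refine ⟨fun h q _ ⟨k, hk⟩ => ?_, fun h => ?_⟩
  · rw [hk, pow_mul_eq_comp] at h
    exact h.of_comp
  · induction m using induction_on_primes with
    | zero => exact absurd rfl hm
    | one => exact fun x y hxy => by simpa using hxy
    | prime_mul q a hq ih =>
      rw [pow_mul_eq_comp]
      exact (ih (right_ne_zero_of_mul hm) fun r hr hra => h r hr (dvd_mul_of_dvd_right hra q)).comp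
        (h q hq (dvd_mul_right q a))

theorem injective_pow_iff_forall_pow_eq_one {R : Type*} [CommRing R] [IsDomain R]
    [IsIntegrallyClosed R] {n : ℕ} (hn : n ≠ 0) :
    Injective (fun x : R => x ^ n) ↔ ∀ ζ : R, ζ ^ n = 1 → ζ = 1 := by
  refine ⟨fun h ζ hζ => h (by simpa using hζ), fun h x y hxy => ?_⟩
  obtain rfl | hy := eq_or_ne y 0
  · simpa [hn] using hxy
  let K := FractionRing R
  have hinj := IsFractionRing.injective R K
  have hy' : algebraMap R K y ≠ 0 := (map_ne_zero_iff _ hinj).2 hy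
  have hζ : (algebraMap R K x / algebraMap R K y) ^ n = 1 := by
    simp only at hxy
    rw [div_pow, div_eq_one_iff_eq (pow_ne_zero _ hy'), ← map_pow, ← map_pow, hxy]
  -- a root of unity of the fraction field is integral over `R`, hence lies in `R`
  obtain ⟨ζ, hζx⟩ := (IsIntegrallyClosed.isIntegral_iff (R := R)).1
    (IsIntegral.of_pow (Nat.pos_of_ne_zero hn) (hζ ▸ isIntegral_one))
  have hζ1 : ζ = 1 := h ζ (hinj (by rw [map_pow, hζx, hζ, map_one]))
  rw [hζ1, map_one, eq_comm, div_eq_one_iff_eq hy'] at hζx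
  exact hinj hζx

theorem HenselianLocalRing.exists_pow_eq_one_and_map_eq {R K : Type u} [CommRing R]
    [HenselianLocalRing R] [Field K] (φ : R →+* K) (hφ : Surjective φ) {n : ℕ}
    (hn : (n : K) ≠ 0) {α : K} (hα : α ^ n = 1) : ∃ ζ : R, ζ ^ n = 1 ∧ φ ζ = α := by
  have hn0 : n ≠ 0 := by rintro rfl; exact hn Nat.cast_zero
  have hα0 : α ≠ 0 := by rintro rfl; simp [hn0] at hα
  have hensel := (HenselianLocalRing.TFAE R).out 0 2
  obtain ⟨ζ, hζ, hζα⟩ := hensel.1 ‹_› φ hφ (X ^ n - 1)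
    (monic_X_pow_sub_C 1 hn0) α (by simp [hα]) (by simp [derivative_X_pow, hn, hα0])
  exact ⟨ζ, by simpa [sub_eq_zero] using hζ, hζα⟩

theorem HenselianLocalRing.of_henselianRing (R : Type*) [CommRing R] [IsLocalRing R]
    [HenselianRing R (maximalIdeal R)] : HenselianLocalRing R where
  is_henselian f hf a₀ h₁ h₂ := HenselianRing.is_henselian f hf a₀ h₁ (h₂.map _)

namespace PadicInt

variable {p : ℕ} [Fact p.Prime]

instance : HenselianLocalRing ℤ_[p] := .of_henselianRing ℤ_[p]

theorem toZMod_eq_zero_iff_dvd (x : ℤ_[p]) : toZMod x = 0 ↔ (p : ℤ_[p]) ∣ x := by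
  rw [← RingHom.mem_ker, ker_toZMod, maximalIdeal_eq_span_p, Ideal.mem_span_singleton]

theorem eq_one_of_pow_eq_one_of_toZMod_eq_one {q : ℕ} (hq : q.Prime) (hq2 : q ≠ 2) {ζ : ℤ_[p]}
    (hζ : toZMod ζ = 1) (hζq : ζ ^ q = 1) : ζ = 1 := by
  by_contra hne
  -- by lifting the exponent, `vₚ(ζ - 1)` would be infinite
  have hpζ1 : (p : ℤ_[p]) ∣ ζ - 1 := by rw [← toZMod_eq_zero_iff_dvd, map_sub, hζ, map_one, sub_self]
  have hpζ : ¬ (p : ℤ_[p]) ∣ ζ := by rw [← toZMod_eq_zero_iff_dvd, hζ]; exact one_ne_zero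
  have hfin : FiniteMultiplicity (p : ℤ_[p]) (ζ - 1) :=
    .of_not_isUnit prime_p.not_isUnit (sub_ne_zero.2 hne)
  have htop : emultiplicity (p : ℤ_[p]) (ζ ^ q - 1 ^ q) = ⊤ := by simp [hζq]
  have : emultiplicity (p : ℤ_[p]) (ζ - 1) = ⊤ := by
    by_cases hpq : p ∣ q
    · obtain rfl := (Nat.prime_dvd_prime_iff_eq Fact.out hq).1 hpq
      rw [emultiplicity_pow_prime_sub_pow_prime prime_p (hq.odd_of_ne_two hq2) hpζ1 hpζ] at htop
      exact (WithTop.add_eq_top.1 htop).resolve_right WithTop.one_ne_top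
    · rwa [emultiplicity_pow_sub_pow_of_prime prime_p hpζ1 hpζ] at htop
      rwa [← toZMod_eq_zero_iff_dvd, map_natCast, ZMod.natCast_eq_zero_iff]
  exact emultiplicity_eq_top.1 this hfin

theorem exists_pow_eq_one_ne_one_iff {q : ℕ} (hq : q.Prime) :
    (∃ ζ : ℤ_[p], ζ ^ q = 1 ∧ ζ ≠ 1) ↔ q ∣ 2 * (p - 1) := by
  constructor
  · rintro ⟨ζ, hζq, hζ1⟩
    by_contra hdvd
    refine hζ1 (eq_one_of_pow_eq_one_of_toZMod_eq_one hq ?_ ?_ hζq)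
    · rintro rfl; exact hdvd (dvd_mul_right 2 _)
    · have hb0 : toZMod ζ ≠ 0 := fun h => by simpa [h, hq.ne_zero] using congrArg toZMod hζq
      refine (pow_eq_one_iff_of_coprime ((hq.coprime_iff_not_dvd).2 hdvd)).1
        ⟨by rw [← map_pow, hζq, map_one], ?_⟩
      rw [pow_mul', ZMod.pow_card_sub_one_eq_one hb0, one_pow]
  · intro hdvd
    rcases (Nat.Prime.dvd_mul hq).1 hdvd with h2 | hp1
    · obtain rfl := (Nat.prime_dvd_prime_iff_eq hq Nat.prime_two).1 h2
      exact ⟨-1, by norm_num, by norm_num⟩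
    · have := Fact.mk hq
      obtain ⟨a, ha⟩ := exists_prime_orderOf_dvd_card q (G := (ZMod p)ˣ) (by rwa [ZMod.card_units])
      have hqp : (q : ZMod p) ≠ 0 := by
        have hp2 := (Fact.out : p.Prime).two_le
        rw [Ne, ZMod.natCast_eq_zero_iff]
        exact Nat.not_dvd_of_pos_of_lt hq.pos ((Nat.le_of_dvd (by omega) hp1).trans_lt (by omega))
      obtain ⟨ζ, hζq, hζa⟩ := HenselianLocalRing.exists_pow_eq_one_and_map_eq toZMod
        (ZMod.ringHom_surjective _) hqp (α := a)
        (by rw [← Units.val_pow_eq_pow_val, ← ha, pow_orderOf_eq_one, Units.val_one])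
      refine ⟨ζ, hζq, fun h => hq.ne_one ?_⟩
      rw [← ha, orderOf_eq_one_iff, Units.ext_iff, ← hζa, h, map_one, Units.val_one]

end PadicInt

/-- Let `p` be a prime and `m` a positive integer. The map `x ↦ xᵐ` on `ℤₚ` is
injective if and only if `gcd(m, 2(p−1)) = 1`. -/
theorem stmt_19 (p : ℕ) [Fact p.Prime] (m : ℕ) (hm : 0 < m) :
    Function.Injective (fun x : ℤ_[p] => x ^ m) ↔ Nat.gcd m (2 * (p - 1)) = 1 := by
  rw [injective_pow_iff_forall_prime hm.ne', ← Nat.coprime_iff_gcd_eq_one, ← not_iff_not,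
    Nat.Prime.not_coprime_iff_dvd]
  push Not
  refine exists_congr fun q => and_congr_right fun hq => and_congr_right fun _ => ?_
  rw [injective_pow_iff_forall_pow_eq_one hq.ne_zero]
  push Not
  exact PadicInt.exists_pow_eq_one_ne_one_iff hq
end
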